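/- The session dependency graph is invariant under structural congruence: if P and Q are well-typed processes with P ≡ Q, then G(P) and G(Q) are isomorphic as labelled graphs. -/

import Mathlib

namespace Sess

/- Session types `α ::= ?(θ).α | !(θ).α | &{l_i:α_i} | ⊕{l_i:α_i} | end`,
with payloads `θ` a basic sort, a service sort, or a session type
(delegation).  Branching and selection are `n`-ary, labels are `Fin n`. -/
mutual
  inductive SType : Type where
    | recv : Payload → SType → SType
    | send : Payload → SType → SType
    | branch : (n : ℕ) → (Fin n → SType) → SType
    | select : (n : ℕ) → (Fin n → SType) → SType
    | done : SType
  inductive Payload : Type where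
    | basicN : Payload
    | basicB : Payload
    | serv : SType → Payload
    | sess : SType → Payload
end

/-- Duality: swaps input/output and branching/selection, pointwise. -/
def SType.dual : SType → SType
  | .recv θ α => .send θ α.dual
  | .send θ α => .recv θ α.dual
  | .branch n ts => .select n (fun i => (ts i).dual)
  | .select n ts => .branch n (fun i => (ts i).dual)
  | .done => .done

/-- First-order values: basic values and service names. -/
inductive Val : Type where
  | vnat : ℕ → Val
  | vbool : Bool → Val
  | vname : ℕ → Val

/-- Expressions: literals and (value) variables. -/
inductive Expr : Type where
  | lit : Val → Expr
  | evar : ℕ → Expr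

/-- Evaluation of (closed) expressions. -/
def Expr.eval : Expr → Option Val
  | .lit v => some v
  | .evar _ => none

/- Processes of the session π-calculus.  Session channels, service names and
variables are natural numbers; branching is `n`-ary with labels `Fin n` and
`sel k j P` selects the `j`-th label. -/
inductive Proc : Type where
  | nil : Proc
  | par : Proc → Proc → Proc
  | nu : ℕ → Proc → Proc                -- (νk)P, session restriction
  | serv : ℕ → ℕ → Proc → Proc          -- a(k).P
  | rserv : ℕ → ℕ → Proc → Proc         -- !a(k).P
  | req : ℕ → ℕ → Proc → Proc           -- ā(k).P
  | inp : ℕ → ℕ → Proc → Proc           -- k?(x).P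
  | out : ℕ → Expr → Proc → Proc        -- k!⟨e⟩.P
  | inS : ℕ → ℕ → Proc → Proc           -- k?((k')).P
  | outS : ℕ → ℕ → Proc → Proc          -- k!⟨⟨k'⟩⟩.P
  | branch : ℕ → (n : ℕ) → (Fin n → Proc) → Proc
  | sel : ℕ → ℕ → Proc → Proc
  | cond : Expr → Proc → Proc → Proc

/-- Free session channels of a process. -/
def fsc : Proc → Finset ℕ
  | .nil => ∅
  | .par P Q => fsc P ∪ fsc Q
  | .nu k P => (fsc P).erase k
  | .serv _ k P => (fsc P).erase k
  | .rserv _ k P => (fsc P).erase k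
  | .req _ k P => (fsc P).erase k
  | .inp k _ P => insert k (fsc P)
  | .out k _ P => insert k (fsc P)
  | .inS k k' P => insert k ((fsc P).erase k')
  | .outS k k' P => insert k (insert k' (fsc P))
  | .branch k n Ps => insert k (Finset.univ.biUnion fun i : Fin n => fsc (Ps i))
  | .sel k _ P => insert k (fsc P)
  | .cond _ P Q => fsc P ∪ fsc Q

/-- All session channels occurring in a process (free or bound). -/
def chans : Proc → Finset ℕ
  | .nil => ∅
  | .par P Q => chans P ∪ chans Q
  | .nu k P => insert k (chans P)
  | .serv _ k P => insert k (chans P)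
  | .rserv _ k P => insert k (chans P)
  | .req _ k P => insert k (chans P)
  | .inp k _ P => insert k (chans P)
  | .out k _ P => insert k (chans P)
  | .inS k k' P => insert k (insert k' (chans P))
  | .outS k k' P => insert k (insert k' (chans P))
  | .branch k n Ps => insert k (Finset.univ.biUnion fun i : Fin n => chans (Ps i))
  | .sel k _ P => insert k (chans P)
  | .cond _ P Q => chans P ∪ chans Q

/-- Renaming of session channels (applied also under binders; used only with
fresh targets, for α-conversion). -/
def srename (f : ℕ → ℕ) : Proc → Proc
  | .nil => .nil
  | .par P Q => .par (srename f P) (srename f Q)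
  | .nu k P => .nu (f k) (srename f P)
  | .serv a k P => .serv a (f k) (srename f P)
  | .rserv a k P => .rserv a (f k) (srename f P)
  | .req a k P => .req a (f k) (srename f P)
  | .inp k x P => .inp (f k) x (srename f P)
  | .out k e P => .out (f k) e (srename f P)
  | .inS k k' P => .inS (f k) (f k') (srename f P)
  | .outS k k' P => .outS (f k) (f k') (srename f P)
  | .branch k n Ps => .branch (f k) n (fun i => srename f (Ps i))
  | .sel k j P => .sel (f k) j (srename f P)
  | .cond e P Q => .cond e (srename f P) (srename f Q)

/-- Substitution of a value for a variable in an expression. -/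
def Expr.substV (x : ℕ) (v : Val) : Expr → Expr
  | .lit w => .lit w
  | .evar y => if y = x then .lit v else .evar y

/-- Substitution in service-name position. -/
def substName (x : ℕ) (v : Val) (a : ℕ) : ℕ :=
  match v with
  | .vname b => if a = x then b else a
  | _ => a

/-- Substitution of a value for a variable in a process. -/
def Proc.substV (x : ℕ) (v : Val) : Proc → Proc
  | .nil => .nil
  | .par P Q => .par (P.substV x v) (Q.substV x v)
  | .nu k P => .nu k (P.substV x v)
  | .serv a k P => .serv (substName x v a) k (P.substV x v)
  | .rserv a k P => .rserv (substName x v a) k (P.substV x v)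
  | .req a k P => .req (substName x v a) k (P.substV x v)
  | .inp k y P => if y = x then .inp k y P else .inp k y (P.substV x v)
  | .out k e P => .out k (e.substV x v) (P.substV x v)
  | .inS k k' P => .inS k k' (P.substV x v)
  | .outS k k' P => .outS k k' (P.substV x v)
  | .branch k n Ps => .branch k n (fun i => (Ps i).substV x v)
  | .sel k j P => .sel k j (P.substV x v)
  | .cond e P Q => .cond (e.substV x v) (P.substV x v) (Q.substV x v)

/-- Structural congruence. -/
inductive SCong : Proc → Proc → Prop where
  | refl (P) : SCong P P
  | symm : SCong P Q → SCong Q P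
  | trans : SCong P Q → SCong Q R → SCong P R
  | parComm (P Q) : SCong (.par P Q) (.par Q P)
  | parAssoc (P Q R) : SCong (.par P (.par Q R)) (.par (.par P Q) R)
  | parNil (P) : SCong (.par P .nil) P
  | nuNil (k) : SCong (.nu k .nil) .nil
  | scope (P Q : Proc) (k : ℕ) : k ∉ fsc P →
      SCong (.par P (.nu k Q)) (.nu k (.par P Q))
  | alpha (P : Proc) (k k' : ℕ) : k' ∉ chans P →
      SCong (.nu k P) (.nu k' (srename (fun c => if c = k then k' else c) P))
  | parCong : SCong P P' → SCong Q Q' → SCong (.par P Q) (.par P' Q')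
  | nuCong (k) : SCong P P' → SCong (.nu k P) (.nu k P')
  | servCong (a k) : SCong P P' → SCong (.serv a k P) (.serv a k P')
  | rservCong (a k) : SCong P P' → SCong (.rserv a k P) (.rserv a k P')
  | reqCong (a k) : SCong P P' → SCong (.req a k P) (.req a k P')
  | inpCong (k x) : SCong P P' → SCong (.inp k x P) (.inp k x P')
  | outCong (k e) : SCong P P' → SCong (.out k e P) (.out k e P')
  | inSCong (k k') : SCong P P' → SCong (.inS k k' P) (.inS k k' P')
  | outSCong (k k') : SCong P P' → SCong (.outS k k' P) (.outS k k' P')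
  | branchCong (k) {n} {Ps Ps' : Fin n → Proc} :
      (∀ i, SCong (Ps i) (Ps' i)) → SCong (.branch k n Ps) (.branch k n Ps')
  | selCong (k j) : SCong P P' → SCong (.sel k j P) (.sel k j P')
  | condCong (e) : SCong P P' → SCong Q Q' →
      SCong (.cond e P Q) (.cond e P' Q')

/-- Reduction semantics. -/
inductive Red : Proc → Proc → Prop where
  | init (a k P Q) :
      Red (.par (.serv a k P) (.req a k Q)) (.nu k (.par P Q))
  | rinit (a k P Q) :
      Red (.par (.rserv a k P) (.req a k Q))
          (.par (.rserv a k P) (.nu k (.par P Q)))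
  | com (k x e P Q v) : e.eval = some v →
      Red (.par (.inp k x P) (.out k e Q)) (.par (P.substV x v) Q)
  | del (k k' P Q) :
      Red (.par (.inS k k' P) (.outS k k' Q)) (.par P Q)
  | sel {n} (k : ℕ) (Ps : Fin n → Proc) (j : ℕ) (h : j < n) (Q) :
      Red (.par (.branch k n Ps) (.sel k j Q)) (.par (Ps ⟨j, h⟩) Q)
  | ifT (e P Q) : e.eval = some (.vbool true) → Red (.cond e P Q) P
  | ifF (e P Q) : e.eval = some (.vbool false) → Red (.cond e P Q) Q
  | par (Q) : Red P P' → Red (.par P Q) (.par P' Q)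
  | res (k) : Red P P' → Red (.nu k P) (.nu k P')
  | str : SCong P Q → Red Q Q' → SCong Q' P' → Red P P'

/-- Entries of session environments: session types or `⊥`. -/
inductive TB : Type where
  | ty : SType → TB
  | bot : TB

/-- Service typings: partial maps from names/variables to sorts (payloads). -/
def PEnv : Type := ℕ → Option Payload

/-- Session typings: partial maps from session channels to types or `⊥`. -/
def SEnv : Type := ℕ → Option TB

/-- Typing of expressions. -/
inductive ETy : PEnv → Expr → Payload → Prop where
  | nat (Γ n) : ETy Γ (.lit (.vnat n)) .basicN
  | bool (Γ b) : ETy Γ (.lit (.vbool b)) .basicB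
  | name {Γ a α} : Γ a = some (.serv α) → ETy Γ (.lit (.vname a)) (.serv α)
  | evar {Γ x S} : Γ x = some S → ETy Γ (.evar x) S

/-- Duality check `Δ₁ ≍ Δ₂`: both environments may mention a channel only
with dual session types. -/
def Compat (Δ₁ Δ₂ : SEnv) : Prop :=
  ∀ k t₁ t₂, Δ₁ k = some t₁ → Δ₂ k = some t₂ →
    ∃ α, t₁ = TB.ty α ∧ t₂ = TB.ty α.dual

/-- Environment composition `Δ₁ ⊙ Δ₂`: channels occurring on both sides get
`⊥` (both endpoints have been found). -/
def comp (Δ₁ Δ₂ : SEnv) : SEnv := fun k =>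
  match Δ₁ k, Δ₂ k with
  | some _, some _ => some TB.bot
  | some t, none => some t
  | none, some t => some t
  | none, none => none

/-- The empty session environment. -/
def emptyS : SEnv := fun _ => none

/-- The session typing judgement `Γ ⊢ P ▷ Δ` with the modified service rule:
a service body is typed with session environment exactly `k : α`. -/
inductive Typed : PEnv → Proc → SEnv → Prop where
  | tServ {Γ a α k P} : Γ a = some (.serv α) →
      Typed Γ P (Function.update emptyS k (some (TB.ty α))) →
      Typed Γ (.serv a k P) emptyS
  | tRServ {Γ a α k P} : Γ a = some (.serv α) →
      Typed Γ P (Function.update emptyS k (some (TB.ty α))) →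
      Typed Γ (.rserv a k P) emptyS
  | tReq {Γ a α k P Δ} : Γ a = some (.serv α) → Δ k = none →
      Typed Γ P (Function.update Δ k (some (TB.ty α.dual))) →
      Typed Γ (.req a k P) Δ
  | tIn {Γ k x S α P Δ} : Δ k = none → (∀ β, S ≠ Payload.sess β) →
      Typed (Function.update Γ x (some S)) P
        (Function.update Δ k (some (TB.ty α))) →
      Typed Γ (.inp k x P) (Function.update Δ k (some (TB.ty (.recv S α))))
  | tOut {Γ k e S α P Δ} : Δ k = none → ETy Γ e S →
      (∀ β, S ≠ Payload.sess β) →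
      Typed Γ P (Function.update Δ k (some (TB.ty α))) →
      Typed Γ (.out k e P) (Function.update Δ k (some (TB.ty (.send S α))))
  | tInS {Γ k k' α β P Δ} : Δ k = none → Δ k' = none → k ≠ k' →
      Typed Γ P (Function.update (Function.update Δ k (some (TB.ty α))) k'
        (some (TB.ty β))) →
      Typed Γ (.inS k k' P)
        (Function.update Δ k (some (TB.ty (.recv (.sess β) α))))
  | tDel {Γ k k' α β P Δ} : Δ k = none → Δ k' = none → k ≠ k' →
      Typed Γ P (Function.update Δ k (some (TB.ty α))) →
      Typed Γ (.outS k k' P)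
        (Function.update (Function.update Δ k
          (some (TB.ty (.send (.sess β) α)))) k' (some (TB.ty β)))
  | tBra {Γ k n} {Ps : Fin n → Proc} {ts : Fin n → SType} {Δ} : Δ k = none →
      (∀ i, Typed Γ (Ps i) (Function.update Δ k (some (TB.ty (ts i))))) →
      Typed Γ (.branch k n Ps)
        (Function.update Δ k (some (TB.ty (.branch n ts))))
  | tSel {Γ k n j} {ts : Fin n → SType} {P Δ} : Δ k = none → (h : j < n) →
      Typed Γ P (Function.update Δ k (some (TB.ty (ts ⟨j, h⟩)))) →
      Typed Γ (.sel k j P)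
        (Function.update Δ k (some (TB.ty (.select n ts))))
  | tPar {Γ P₁ P₂ Δ₁ Δ₂} : Typed Γ P₁ Δ₁ → Typed Γ P₂ Δ₂ → Compat Δ₁ Δ₂ →
      Typed Γ (.par P₁ P₂) (comp Δ₁ Δ₂)
  | tInact {Γ Δ} : (∀ k t, Δ k = some t → t = TB.ty .done) →
      Typed Γ .nil Δ
  | tRes {Γ k P Δ} : Δ k = none →
      Typed Γ P (Function.update Δ k (some TB.bot)) →
      Typed Γ (.nu k P) Δ
  | tCond {Γ e P₁ P₂ Δ} : ETy Γ e .basicB → Typed Γ P₁ Δ → Typed Γ P₂ Δ →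
      Typed Γ (.cond e P₁ P₂) Δ
  | tBot {Γ P Δ k} : Typed Γ P (Function.update Δ k (some (TB.ty .done))) →
      Typed Γ P (Function.update Δ k (some TB.bot))

/-- `P` is well-typed. -/
def WellTyped (P : Proc) : Prop := ∃ Γ Δ, Typed Γ P Δ

/- Multigraphs, walks and acyclicity (cycles are closed walks without
repeated edges). -/
structure Multigraph (V E : Type) where
  ends : E → Sym2 V

inductive Multigraph.Walk {V E : Type} (G : Multigraph V E) : V → V → Type
  | nil (v : V) : Walk G v v
  | cons {u v w : V} (e : E) (h : G.ends e = s(u, v)) (p : Walk G v w) :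
      Walk G u w

def Multigraph.Walk.edges {V E : Type} {G : Multigraph V E} :
    {u v : V} → G.Walk u v → List E
  | _, _, .nil _ => []
  | _, _, .cons e _ p => e :: p.edges

def Multigraph.Acyclic {V E : Type} (G : Multigraph V E) : Prop :=
  ∀ (v : V) (w : G.Walk v v), w.edges.Nodup → w.edges = []

/-- Labelled graphs: nodes `0, …, n-1`, a multiset (list) of edges, and a
labelling of nodes by finite sets of session channels. -/
structure LGraph where
  n : ℕ
  edges : List (ℕ × ℕ)
  labels : ℕ → Finset ℕ

def LGraph.empty : LGraph := ⟨0, [], fun _ => ∅⟩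

def LGraph.single (s : Finset ℕ) : LGraph := ⟨1, [], fun _ => s⟩

/-- Erase a name from every label (used for restriction). -/
def LGraph.eraseL (k : ℕ) (G : LGraph) : LGraph :=
  ⟨G.n, G.edges, fun p => (G.labels p).erase k⟩

/-- Disjoint union of labelled graphs, adding one edge for each pair of
nodes `(p, q)` and each session channel in both their labels. -/
def LGraph.glue (G H : LGraph) : LGraph where
  n := G.n + H.n
  edges :=
    G.edges ++ H.edges.map (fun e => (G.n + e.1, G.n + e.2)) ++
      (List.range G.n).flatMap fun p =>
        (List.range H.n).flatMap fun q =>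
          List.replicate ((G.labels p ∩ H.labels q).card) (p, G.n + q)
  labels := fun p => if p < G.n then G.labels p else H.labels (p - G.n)

/-- The underlying multigraph of a labelled graph. -/
def LGraph.toMG (G : LGraph) : Multigraph ℕ (Fin G.edges.length) :=
  ⟨fun i => s((G.edges.get i).1, (G.edges.get i).2)⟩

def LGraph.Acyclic (G : LGraph) : Prop := G.toMG.Acyclic

/-- `k ⇝ k'` in `G`: some node labelled `k` has a path to some node
labelled `k'`. -/
def LGraph.Reaches (G : LGraph) (k k' : ℕ) : Prop :=
  ∃ p p', p < G.n ∧ p' < G.n ∧ k ∈ G.labels p ∧ k' ∈ G.labels p' ∧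
    Nonempty (G.toMG.Walk p p')

/-- The session dependency graph of a process: one node per thread, labelled
by its free session channels; one edge per shared session channel between
parallel threads; restriction erases labels. -/
def graphOf : Proc → LGraph
  | .nil => .empty
  | .par P Q => (graphOf P).glue (graphOf Q)
  | .nu k P => (graphOf P).eraseL k
  | P => .single (fsc P)

/-- Sub-term relation on processes. -/
inductive Subterm : Proc → Proc → Prop where
  | refl (P) : Subterm P P
  | parL : Subterm Q P₁ → Subterm Q (.par P₁ P₂)
  | parR : Subterm Q P₂ → Subterm Q (.par P₁ P₂)
  | nu (k) : Subterm Q P → Subterm Q (.nu k P)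
  | serv (a k) : Subterm Q P → Subterm Q (.serv a k P)
  | rserv (a k) : Subterm Q P → Subterm Q (.rserv a k P)
  | req (a k) : Subterm Q P → Subterm Q (.req a k P)
  | inp (k x) : Subterm Q P → Subterm Q (.inp k x P)
  | out (k e) : Subterm Q P → Subterm Q (.out k e P)
  | inS (k k') : Subterm Q P → Subterm Q (.inS k k' P)
  | outS (k k') : Subterm Q P → Subterm Q (.outS k k' P)
  | branch (k) {n} {Ps : Fin n → Proc} (i : Fin n) :
      Subterm Q (Ps i) → Subterm Q (.branch k n Ps)
  | sel (k j) : Subterm Q P → Subterm Q (.sel k j P)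
  | condT (e) : Subterm Q P₁ → Subterm Q (.cond e P₁ P₂)
  | condF (e) : Subterm Q P₂ → Subterm Q (.cond e P₁ P₂)

/-- `Q` is a sub-process of `P`: a sub-term of some `P' ≡ P`. -/
def SubProc (Q P : Proc) : Prop := ∃ P', SCong P P' ∧ Subterm Q P'

/-- A process is transparent iff every sub-process has an acyclic session
dependency graph. -/
def Transparent (P : Proc) : Prop := ∀ Q, SubProc Q P → (graphOf Q).Acyclic

/-- `P` contains no restriction. -/
def NoNu : Proc → Prop
  | .nil => True
  | .par P Q => NoNu P ∧ NoNu Q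
  | .nu _ _ => False
  | .serv _ _ P => NoNu P
  | .rserv _ _ P => NoNu P
  | .req _ _ P => NoNu P
  | .inp _ _ P => NoNu P
  | .out _ _ P => NoNu P
  | .inS _ _ P => NoNu P
  | .outS _ _ P => NoNu P
  | .branch _ n Ps => ∀ i : Fin n, NoNu (Ps i)
  | .sel _ _ P => NoNu P
  | .cond _ P Q => NoNu P ∧ NoNu Q

/-- A program: no free session channels, and no occurrence of session
restriction up to structural congruence. -/
def IsProgram (P : Proc) : Prop :=
  fsc P = ∅ ∧ ∃ P', SCong P P' ∧ NoNu P'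

/-- A process has no live session channels when all its session channels are
bound by a service or replicated-service prefix. -/
inductive NoLive : Proc → Prop where
  | nil : NoLive .nil
  | par {P Q} : NoLive P → NoLive Q → NoLive (.par P Q)
  | serv (a k P) : NoLive (.serv a k P)
  | rserv (a k P) : NoLive (.rserv a k P)
  | cond {e P Q} : NoLive P → NoLive Q → NoLive (.cond e P Q)

/-- `Q` is irreducible. -/
def Irred (Q : Proc) : Prop := ∀ R, ¬ Red Q R

/-- Reduction contexts `E ::= · | E|P | (νk)E`. -/
inductive Ctx : Type where
  | hole : Ctx
  | parC : Ctx → Proc → Ctx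
  | nuC : ℕ → Ctx → Ctx

def plug : Ctx → Proc → Proc
  | .hole, P => P
  | .parC E Q, P => .par (plug E P) Q
  | .nuC k E, P => .nu k (plug E P)

/-- One unfolding of the (coinductive) progress property. -/
def ProgressF (X : Proc → Prop) (P : Proc) : Prop :=
  ∀ P', Relation.ReflTransGen Red P P' →
    ∀ (E : Ctx) (P'' : Proc), SCong P' (plug E P'') → ¬ NoLive P'' →
      ∃ Q R, Irred Q ∧ WellTyped (.par P'' Q) ∧ Red (.par P'' Q) R ∧ X R

/-- Progress, as the greatest fixed point of `ProgressF`. -/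
def HasProgress (P : Proc) : Prop :=
  ∃ X : Proc → Prop, (∀ p, X p → ProgressF X p) ∧ X P

end Sess

namespace Sess
open Finset

lemma fsc_subset_chans : ∀ P : Proc, fsc P ⊆ chans P := by
  intro P
  induction P with
  | nil => simp [fsc, chans]
  | par P Q ihP ihQ => exact Finset.union_subset_union ihP ihQ
  | nu k P ih => exact (Finset.erase_subset_erase _ ih).trans ((Finset.erase_subset _ _).trans (Finset.subset_insert _ _))
  | serv a k P ih => exact (Finset.erase_subset_erase _ ih).trans ((Finset.erase_subset _ _).trans (Finset.subset_insert _ _))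
  | rserv a k P ih => exact (Finset.erase_subset_erase _ ih).trans ((Finset.erase_subset _ _).trans (Finset.subset_insert _ _))
  | req a k P ih => exact (Finset.erase_subset_erase _ ih).trans ((Finset.erase_subset _ _).trans (Finset.subset_insert _ _))
  | inp k x P ih => exact Finset.insert_subset_insert _ ih
  | out k e P ih => exact Finset.insert_subset_insert _ ih
  | inS k k' P ih =>
      exact Finset.insert_subset_insert _ (((Finset.erase_subset _ _).trans ih).trans (Finset.subset_insert _ _))
  | outS k k' P ih => exact Finset.insert_subset_insert _ (Finset.insert_subset_insert _ ih)
  | branch k n Ps ih =>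
      exact Finset.insert_subset_insert _ (Finset.biUnion_mono fun i _ => ih i)
  | sel k j P ih => exact Finset.insert_subset_insert _ ih
  | cond e P Q ihP ihQ => exact Finset.union_subset_union ihP ihQ

end Sess
namespace Sess
open Finset

lemma image_erase_of_injOn {f : ℕ → ℕ} {s : Finset ℕ} {k : ℕ}
    (hf : Set.InjOn f ↑(insert k s)) :
    (s.erase k).image f = (s.image f).erase (f k) := by
  ext b
  simp only [mem_image, mem_erase]
  constructor
  · rintro ⟨a, ⟨hak, has⟩, rfl⟩
    refine ⟨fun h => hak (hf ?_ ?_ h), a, has, rfl⟩ <;> simp [has]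
  · rintro ⟨hb, a, has, rfl⟩
    exact ⟨a, ⟨fun h => hb (by rw [h]), has⟩, rfl⟩

lemma fsc_srename (f : ℕ → ℕ) :
    ∀ P : Proc, Set.InjOn f ↑(chans P) → fsc (srename f P) = (fsc P).image f := by
  intro P
  induction P with
  | nil => intro _; simp [fsc, srename]
  | par P Q ihP ihQ =>
      intro hf
      simp only [fsc, srename, Finset.image_union]
      rw [ihP (hf.mono (by intro x hx; simp [chans] at hx ⊢; tauto)),
        ihQ (hf.mono (by intro x hx; simp [chans] at hx ⊢; tauto))]
  | nu k P ih =>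
      intro hf
      simp only [fsc, srename]
      rw [ih (hf.mono (by intro x hx; simp [chans] at hx ⊢; tauto)),
        image_erase_of_injOn (hf.mono ?_)]
      intro x hx
      simp only [Finset.coe_insert, Set.mem_insert_iff, Finset.mem_coe] at hx
      simp only [chans, Finset.coe_insert, Set.mem_insert_iff, Finset.mem_coe]
      rcases hx with h | h
      · exact Or.inl h
      · exact Or.inr (fsc_subset_chans P h)
  | serv a k P ih =>
      intro hf
      simp only [fsc, srename]
      rw [ih (hf.mono (by intro x hx; simp [chans] at hx ⊢; tauto)),
        image_erase_of_injOn (hf.mono ?_)]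
      intro x hx
      simp only [Finset.coe_insert, Set.mem_insert_iff, Finset.mem_coe] at hx
      simp only [chans, Finset.coe_insert, Set.mem_insert_iff, Finset.mem_coe]
      rcases hx with h | h
      · exact Or.inl h
      · exact Or.inr (fsc_subset_chans P h)
  | rserv a k P ih =>
      intro hf
      simp only [fsc, srename]
      rw [ih (hf.mono (by intro x hx; simp [chans] at hx ⊢; tauto)),
        image_erase_of_injOn (hf.mono ?_)]
      intro x hx
      simp only [Finset.coe_insert, Set.mem_insert_iff, Finset.mem_coe] at hx
      simp only [chans, Finset.coe_insert, Set.mem_insert_iff, Finset.mem_coe]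
      rcases hx with h | h
      · exact Or.inl h
      · exact Or.inr (fsc_subset_chans P h)
  | req a k P ih =>
      intro hf
      simp only [fsc, srename]
      rw [ih (hf.mono (by intro x hx; simp [chans] at hx ⊢; tauto)),
        image_erase_of_injOn (hf.mono ?_)]
      intro x hx
      simp only [Finset.coe_insert, Set.mem_insert_iff, Finset.mem_coe] at hx
      simp only [chans, Finset.coe_insert, Set.mem_insert_iff, Finset.mem_coe]
      rcases hx with h | h
      · exact Or.inl h
      · exact Or.inr (fsc_subset_chans P h)
  | inp k x P ih =>
      intro hf
      simp only [fsc, srename, Finset.image_insert]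
      rw [ih (hf.mono (by intro y hy; simp [chans] at hy ⊢; tauto))]
  | out k e P ih =>
      intro hf
      simp only [fsc, srename, Finset.image_insert]
      rw [ih (hf.mono (by intro y hy; simp [chans] at hy ⊢; tauto))]
  | inS k k' P ih =>
      intro hf
      simp only [fsc, srename, Finset.image_insert]
      rw [ih (hf.mono (by intro y hy; simp [chans] at hy ⊢; tauto)),
        image_erase_of_injOn (hf.mono ?_)]
      intro y hy
      simp only [Finset.coe_insert, Set.mem_insert_iff, Finset.mem_coe] at hy
      simp only [chans, Finset.coe_insert, Set.mem_insert_iff, Finset.mem_coe]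
      rcases hy with h | h
      · exact Or.inr (Or.inl h)
      · exact Or.inr (Or.inr (fsc_subset_chans P h))
  | outS k k' P ih =>
      intro hf
      simp only [fsc, srename, Finset.image_insert]
      rw [ih (hf.mono (by intro y hy; simp [chans] at hy ⊢; tauto))]
  | branch k n Ps ih =>
      intro hf
      simp only [fsc, srename, Finset.image_insert]
      rw [Finset.biUnion_image]
      congr 1
      apply Finset.biUnion_congr rfl
      intro i _
      exact ih i (hf.mono (by
        intro y hy
        simp only [chans, Finset.coe_insert, Set.mem_insert_iff, Finset.mem_coe,
          Finset.mem_biUnion, Finset.mem_univ, true_and]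
        exact Or.inr ⟨i, hy⟩))
  | sel k j P ih =>
      intro hf
      simp only [fsc, srename, Finset.image_insert]
      rw [ih (hf.mono (by intro y hy; simp [chans] at hy ⊢; tauto))]
  | cond e P Q ihP ihQ =>
      intro hf
      simp only [fsc, srename, Finset.image_union]
      rw [ihP (hf.mono (by intro y hy; simp [chans] at hy ⊢; tauto)),
        ihQ (hf.mono (by intro y hy; simp [chans] at hy ⊢; tauto))]

end Sess
namespace Sess
open Finset

lemma swap_injOn {k k' : ℕ} {P : Proc} (h : k' ∉ chans P) :
    Set.InjOn (fun c => if c = k then k' else c) ↑(chans P) := by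
  intro a ha b hb hab
  simp only [Finset.mem_coe] at ha hb
  by_cases h1 : a = k <;> by_cases h2 : b = k <;> simp [h1, h2] at hab <;>
    first
    | (subst h1 h2; rfl)
    | (exfalso; subst hab; first | exact h hb | exact h ha)
    | exact hab
    | (subst h1; exact absurd (hab ▸ hb) h)
    | (subst h2; exact absurd (hab ▸ ha) h)

lemma fsc_scong {P Q : Proc} (h : SCong P Q) : fsc P = fsc Q := by
  induction h with
  | refl => rfl
  | symm _ ih => exact ih.symm
  | trans _ _ ih1 ih2 => exact ih1.trans ih2
  | parComm P Q => exact Finset.union_comm _ _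
  | parAssoc P Q R => exact (Finset.union_assoc _ _ _).symm
  | parNil P => simp [fsc]
  | nuNil k => simp [fsc]
  | scope P Q k hk =>
      ext c
      simp only [fsc, Finset.mem_union, Finset.mem_erase]
      by_cases hc : c = k
      · subst hc; simp [hk]
      · simp [hc]
  | alpha P k k' hk' =>
      have hf := swap_injOn (k := k) hk'
      simp only [fsc]
      rw [fsc_srename _ _ hf]
      ext c
      simp only [Finset.mem_erase, Finset.mem_image]
      constructor
      · rintro ⟨hck, hc⟩
        have hck' : c ≠ k' := fun h => hk' (h ▸ fsc_subset_chans P hc)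
        exact ⟨hck', c, hc, by simp [hck]⟩
      · rintro ⟨hck', a, ha, rfl⟩
        by_cases hak : a = k
        · simp [hak] at hck'
        · simpa [hak] using ha
  | parCong _ _ ih1 ih2 => simp only [fsc]; rw [ih1, ih2]
  | nuCong k _ ih => simp only [fsc]; rw [ih]
  | servCong a k _ ih => simp only [fsc]; rw [ih]
  | rservCong a k _ ih => simp only [fsc]; rw [ih]
  | reqCong a k _ ih => simp only [fsc]; rw [ih]
  | inpCong k x _ ih => simp only [fsc]; rw [ih]
  | outCong k e _ ih => simp only [fsc]; rw [ih]
  | inSCong k k' _ ih => simp only [fsc]; rw [ih]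
  | outSCong k k' _ ih => simp only [fsc]; rw [ih]
  | branchCong k _ ih =>
      simp only [fsc]
      congr 1
      exact Finset.biUnion_congr rfl fun i _ => ih i
  | selCong k j _ ih => simp only [fsc]; rw [ih]
  | condCong e _ _ ih1 ih2 => simp only [fsc]; rw [ih1, ih2]

end Sess
namespace Sess
open Finset

/-- coercion of flatMap over a range to a big sum of multisets. -/
lemma coe_flatMap_range {α : Type*} (g : ℕ) (f : ℕ → List α) :
    (((List.range g).flatMap f : List α) : Multiset α)
      = ∑ p ∈ Finset.range g, (f p : Multiset α) := by
  induction g with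
  | zero => simp
  | succ n ih =>
      rw [List.range_succ, Finset.sum_range_succ, ← ih]
      rw [List.flatMap_append, ← Multiset.coe_add]
      simp

lemma glue_edges_map (G H : LGraph) (F : ℕ × ℕ → Sym2 ℕ) :
    Multiset.map F ((G.glue H).edges : Multiset (ℕ × ℕ)) =
      Multiset.map F (G.edges : Multiset (ℕ × ℕ))
      + Multiset.map (fun e => F (G.n + e.1, G.n + e.2)) (H.edges : Multiset (ℕ × ℕ))
      + ∑ p ∈ Finset.range G.n, ∑ q ∈ Finset.range H.n,
          Multiset.replicate ((G.labels p ∩ H.labels q).card) (F (p, G.n + q)) := by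
  simp only [LGraph.glue]
  rw [Multiset.map_coe, List.map_append, List.map_append, ← Multiset.coe_add, ← Multiset.coe_add]
  congr 1
  · rw [List.map_map]
    rfl
  · rw [List.map_flatMap, coe_flatMap_range]
    apply Finset.sum_congr rfl
    intro p _
    rw [List.map_flatMap, coe_flatMap_range]
    apply Finset.sum_congr rfl
    intro q _
    rw [List.map_replicate, Multiset.coe_replicate]

end Sess
namespace Sess
open Finset

def EBound (G : LGraph) : Prop := ∀ e ∈ G.edges, e.1 < G.n ∧ e.2 < G.n

lemma labels_sub : ∀ (P : Proc) (p : ℕ), p < (graphOf P).n →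
    (graphOf P).labels p ⊆ fsc P := by
  intro P
  induction P with
  | nil => intro p hp; exact absurd hp (by simp [graphOf, LGraph.empty])
  | par P Q ihP ihQ =>
      intro p hp
      show (if p < (graphOf P).n then _ else _ : Finset ℕ) ⊆ _
      by_cases h : p < (graphOf P).n
      · rw [if_pos h]
        exact (ihP p h).trans Finset.subset_union_left
      · rw [if_neg h]
        refine (ihQ _ ?_).trans Finset.subset_union_right
        have hp' : p < (graphOf P).n + (graphOf Q).n := hp
        omega
  | nu k P ih =>
      intro p hp
      exact Finset.erase_subset_erase _ (ih p hp)
  | serv a k P ih => intro p _; exact Finset.Subset.refl _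
  | rserv a k P ih => intro p _; exact Finset.Subset.refl _
  | req a k P ih => intro p _; exact Finset.Subset.refl _
  | inp k x P ih => intro p _; exact Finset.Subset.refl _
  | out k e P ih => intro p _; exact Finset.Subset.refl _
  | inS k k' P ih => intro p _; exact Finset.Subset.refl _
  | outS k k' P ih => intro p _; exact Finset.Subset.refl _
  | branch k n Ps ih => intro p _; exact Finset.Subset.refl _
  | sel k j P ih => intro p _; exact Finset.Subset.refl _
  | cond e P Q ihP ihQ => intro p _; exact Finset.Subset.refl _

lemma graphOf_bounded : ∀ P : Proc, EBound (graphOf P) := by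
  intro P
  induction P with
  | par P Q ihP ihQ =>
      intro e he
      have he' : e ∈ (graphOf P).edges ++ (graphOf Q).edges.map _ ++ _ := he
      rw [List.mem_append, List.mem_append] at he'
      show e.1 < (graphOf P).n + (graphOf Q).n ∧ e.2 < (graphOf P).n + (graphOf Q).n
      rcases he' with (h | h) | h
      · have := ihP e h; omega
      · rw [List.mem_map] at h
        obtain ⟨a, ha, rfl⟩ := h
        have := ihQ a ha
        simp only
        omega
      · rw [List.mem_flatMap] at h
        obtain ⟨p, hp, h⟩ := h
        rw [List.mem_flatMap] at h
        obtain ⟨q, hq, h⟩ := h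
        rw [List.mem_range] at hp
        rw [List.mem_range] at hq
        have := List.eq_of_mem_replicate h
        subst this
        simp only
        omega
  | nu k P ih => exact ih
  | _ => intro e he; exact absurd he (by simp [graphOf, LGraph.empty, LGraph.single])

end Sess
namespace Sess

/-- Extension of a node bijection to `ℕ`. -/
def extFin {n m : ℕ} (σ : Fin n ≃ Fin m) (x : ℕ) : ℕ :=
  if h : x < n then (σ ⟨x, h⟩ : Fin m) else x

/-- Isomorphism of labelled graphs: a bijection of nodes preserving labels
and the multiset of (unordered) edges. -/
def LGraph.Iso (G H : LGraph) : Prop :=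
  ∃ σ : Fin G.n ≃ Fin H.n,
    (∀ p : Fin G.n, G.labels p = H.labels (σ p)) ∧
    Multiset.map (fun e => s(extFin σ e.1, extFin σ e.2))
        (G.edges : Multiset (ℕ × ℕ)) =
      Multiset.map (fun e => s(e.1, e.2)) (H.edges : Multiset (ℕ × ℕ))

end Sess
namespace Sess
open Finset

lemma extFin_lt {n m : ℕ} (σ : Fin n ≃ Fin m) {x : ℕ} (h : x < n) :
    extFin σ x = σ ⟨x, h⟩ := dif_pos h

lemma extFin_ge {n m : ℕ} (σ : Fin n ≃ Fin m) {x : ℕ} (h : ¬ x < n) :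
    extFin σ x = x := dif_neg h

lemma equiv_n_eq {n m : ℕ} (σ : Fin n ≃ Fin m) : n = m := by
  simpa using Fintype.card_congr σ

lemma extFin_symm_cancel {n m : ℕ} (σ : Fin n ≃ Fin m) (x : ℕ) :
    extFin σ.symm (extFin σ x) = x := by
  by_cases h : x < n
  · rw [extFin_lt σ h, extFin_lt σ.symm (σ ⟨x, h⟩).isLt]
    simp
  · rw [extFin_ge σ h, extFin_ge σ.symm (by rw [← equiv_n_eq σ]; exact h)]

lemma extFin_trans {a b c : ℕ} (σ : Fin a ≃ Fin b) (τ : Fin b ≃ Fin c) (x : ℕ) :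
    extFin (σ.trans τ) x = extFin τ (extFin σ x) := by
  by_cases h : x < a
  · rw [extFin_lt (σ.trans τ) h, extFin_lt σ h, extFin_lt τ (σ ⟨x, h⟩).isLt]
    simp [Equiv.trans]
  · rw [extFin_ge (σ.trans τ) h, extFin_ge σ h,
      extFin_ge τ (by rw [← equiv_n_eq σ]; exact h)]

lemma extFin_finCongr {n m : ℕ} (hn : n = m) (x : ℕ) : extFin (finCongr hn) x = x := by
  by_cases h : x < n
  · rw [extFin_lt _ h]; rfl
  · exact extFin_ge _ h

lemma iso_of_eq {G H : LGraph} (hn : G.n = H.n)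
    (hl : ∀ p : ℕ, p < G.n → G.labels p = H.labels p)
    (he : Multiset.map (fun e => s(e.1, e.2)) (G.edges : Multiset (ℕ × ℕ))
        = Multiset.map (fun e => s(e.1, e.2)) (H.edges : Multiset (ℕ × ℕ))) :
    G.Iso H := by
  refine ⟨finCongr hn, ?_, ?_⟩
  · intro p
    have : ((finCongr hn) p : ℕ) = (p : ℕ) := rfl
    rw [this]
    exact hl p p.isLt
  · rw [← he]
    apply Multiset.map_congr rfl
    intro e _
    rw [extFin_finCongr, extFin_finCongr]

lemma iso_refl (G : LGraph) : G.Iso G := iso_of_eq rfl (fun _ _ => rfl) rfl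

lemma iso_symm {G H : LGraph} (h : G.Iso H) : H.Iso G := by
  obtain ⟨σ, hl, he⟩ := h
  refine ⟨σ.symm, ?_, ?_⟩
  · intro q
    have := hl (σ.symm q)
    rw [Equiv.apply_symm_apply] at this
    exact this.symm
  · calc Multiset.map (fun e => s(extFin σ.symm e.1, extFin σ.symm e.2))
          (H.edges : Multiset (ℕ × ℕ))
        = Multiset.map (Sym2.map (extFin σ.symm))
            (Multiset.map (fun e => s(e.1, e.2)) (H.edges : Multiset (ℕ × ℕ))) := by
          rw [Multiset.map_map]
          apply Multiset.map_congr rfl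
          rintro ⟨a, b⟩ _
          simp
      _ = Multiset.map (Sym2.map (extFin σ.symm))
            (Multiset.map (fun e => s(extFin σ e.1, extFin σ e.2))
              (G.edges : Multiset (ℕ × ℕ))) := by rw [he]
      _ = Multiset.map (fun e => s(e.1, e.2)) (G.edges : Multiset (ℕ × ℕ)) := by
          rw [Multiset.map_map]
          apply Multiset.map_congr rfl
          intro e _
          simp [Function.comp, Sym2.map_pair_eq, extFin_symm_cancel]

lemma iso_trans {G H I : LGraph} (h1 : G.Iso H) (h2 : H.Iso I) : G.Iso I := by
  obtain ⟨σ, hl1, he1⟩ := h1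
  obtain ⟨τ, hl2, he2⟩ := h2
  refine ⟨σ.trans τ, fun p => (hl1 p).trans (hl2 (σ p)), ?_⟩
  calc Multiset.map (fun e => s(extFin (σ.trans τ) e.1, extFin (σ.trans τ) e.2))
        (G.edges : Multiset (ℕ × ℕ))
      = Multiset.map (Sym2.map (extFin τ))
          (Multiset.map (fun e => s(extFin σ e.1, extFin σ e.2))
            (G.edges : Multiset (ℕ × ℕ))) := by
        rw [Multiset.map_map]
        apply Multiset.map_congr rfl
        intro e _
        simp [Function.comp, Sym2.map_pair_eq, extFin_trans]
    _ = Multiset.map (Sym2.map (extFin τ))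
          (Multiset.map (fun e => s(e.1, e.2)) (H.edges : Multiset (ℕ × ℕ))) := by
        rw [he1]
    _ = Multiset.map (fun e => s(extFin τ e.1, extFin τ e.2))
          (H.edges : Multiset (ℕ × ℕ)) := by
        rw [Multiset.map_map]
        apply Multiset.map_congr rfl
        rintro ⟨a, b⟩ _
        simp
    _ = Multiset.map (fun e => s(e.1, e.2)) (I.edges : Multiset (ℕ × ℕ)) := he2

end Sess
namespace Sess
open Finset

lemma extFin_val {n m : ℕ} (σ : Fin n ≃ Fin m) (p : Fin n) :
    extFin σ (p : ℕ) = (σ p : ℕ) := by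
  rw [extFin_lt σ p.isLt]

def swapEquiv (g h : ℕ) : Fin (g + h) ≃ Fin (h + g) :=
  finSumFinEquiv.symm.trans ((Equiv.sumComm _ _).trans finSumFinEquiv)

lemma extFin_swap_lt {g h x : ℕ} (hx : x < g) :
    extFin (swapEquiv g h) x = h + x := by
  rw [extFin_lt _ (show x < g + h by omega)]
  have h1 : (⟨x, show x < g + h by omega⟩ : Fin (g + h)) = Fin.castAdd h ⟨x, hx⟩ := rfl
  rw [h1]
  simp only [swapEquiv, Equiv.trans_apply, finSumFinEquiv_symm_apply_castAdd,
    Equiv.sumComm_apply, Sum.swap_inl, finSumFinEquiv_apply_right]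
  simp [Fin.natAdd]

lemma extFin_swap_ge {g h x : ℕ} (hx : g ≤ x) (hx2 : x < g + h) :
    extFin (swapEquiv g h) x = x - g := by
  rw [extFin_lt _ hx2]
  have h1 : (⟨x, hx2⟩ : Fin (g + h)) = Fin.natAdd g ⟨x - g, by omega⟩ := by
    apply Fin.ext
    simp only [Fin.natAdd]
    omega
  rw [h1]
  simp only [swapEquiv, Equiv.trans_apply, finSumFinEquiv_symm_apply_natAdd,
    Equiv.sumComm_apply, Sum.swap_inr, finSumFinEquiv_apply_left]
  simp [Fin.castAdd, Fin.castLE]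

def blockEquiv {g g' h h' : ℕ} (σ : Fin g ≃ Fin g') (τ : Fin h ≃ Fin h') :
    Fin (g + h) ≃ Fin (g' + h') :=
  finSumFinEquiv.symm.trans ((σ.sumCongr τ).trans finSumFinEquiv)

lemma extFin_block_lt {g g' h h' : ℕ} (σ : Fin g ≃ Fin g') (τ : Fin h ≃ Fin h')
    {x : ℕ} (hx : x < g) : extFin (blockEquiv σ τ) x = extFin σ x := by
  rw [extFin_lt _ (show x < g + h by omega), extFin_lt σ hx]
  have h1 : (⟨x, show x < g + h by omega⟩ : Fin (g + h)) = Fin.castAdd h ⟨x, hx⟩ := rfl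
  rw [h1]
  simp only [blockEquiv, Equiv.trans_apply, finSumFinEquiv_symm_apply_castAdd,
    Equiv.sumCongr_apply, Sum.map_inl, finSumFinEquiv_apply_left]
  simp [Fin.castAdd, Fin.castLE]

lemma extFin_block_ge {g g' h h' : ℕ} (σ : Fin g ≃ Fin g') (τ : Fin h ≃ Fin h')
    {x : ℕ} (hx : g ≤ x) (hx2 : x < g + h) :
    extFin (blockEquiv σ τ) x = g' + extFin τ (x - g) := by
  rw [extFin_lt _ hx2, extFin_lt τ (show x - g < h by omega)]
  have h1 : (⟨x, hx2⟩ : Fin (g + h)) = Fin.natAdd g ⟨x - g, by omega⟩ := by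
    apply Fin.ext
    simp only [Fin.natAdd]
    omega
  rw [h1]
  simp only [blockEquiv, Equiv.trans_apply, finSumFinEquiv_symm_apply_natAdd,
    Equiv.sumCongr_apply, Sum.map_inr, finSumFinEquiv_apply_right]
  simp [Fin.natAdd]

lemma glue_comm {G H : LGraph} (hG : EBound G) (hH : EBound H) :
    (G.glue H).Iso (H.glue G) := by
  refine ⟨swapEquiv G.n H.n, ?_, ?_⟩
  · intro p
    have hp2 : (p : ℕ) < G.n + H.n := p.isLt
    have hval := (extFin_val (swapEquiv G.n H.n) p).symm
    show (if (p : ℕ) < G.n then G.labels (p : ℕ) else H.labels ((p : ℕ) - G.n)) = _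
    show _ = (if ((swapEquiv G.n H.n p : Fin (H.n + G.n)) : ℕ) < H.n
        then H.labels ((swapEquiv G.n H.n p : Fin (H.n + G.n)) : ℕ)
        else G.labels (((swapEquiv G.n H.n p : Fin (H.n + G.n)) : ℕ) - H.n))
    rw [hval]
    by_cases hp : (p : ℕ) < G.n
    · rw [extFin_swap_lt hp, if_pos hp, if_neg (by omega)]
      congr 1
      omega
    · rw [extFin_swap_ge (by omega) hp2, if_neg hp, if_pos (by omega)]
  · rw [glue_edges_map, glue_edges_map]
    beta_reduce
    have h1 : Multiset.map (fun e => s(extFin (swapEquiv G.n H.n) e.1,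
          extFin (swapEquiv G.n H.n) e.2)) (G.edges : Multiset (ℕ × ℕ))
        = Multiset.map (fun e => s(H.n + e.1, H.n + e.2)) (G.edges : Multiset (ℕ × ℕ)) := by
      apply Multiset.map_congr rfl
      intro e he
      obtain ⟨b1, b2⟩ := hG e (by exact_mod_cast he)
      rw [extFin_swap_lt b1, extFin_swap_lt b2]
    have h2 : Multiset.map (fun e => s(extFin (swapEquiv G.n H.n) (G.n + e.1),
          extFin (swapEquiv G.n H.n) (G.n + e.2))) (H.edges : Multiset (ℕ × ℕ))
        = Multiset.map (fun e => s(e.1, e.2)) (H.edges : Multiset (ℕ × ℕ)) := by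
      apply Multiset.map_congr rfl
      intro e he
      obtain ⟨b1, b2⟩ := hH e (by exact_mod_cast he)
      rw [extFin_swap_ge (by omega) (by omega), extFin_swap_ge (by omega) (by omega),
        show G.n + e.1 - G.n = e.1 by omega, show G.n + e.2 - G.n = e.2 by omega]
    have h3 : (∑ p ∈ Finset.range G.n, ∑ q ∈ Finset.range H.n,
          Multiset.replicate ((G.labels p ∩ H.labels q).card)
            s(extFin (swapEquiv G.n H.n) p, extFin (swapEquiv G.n H.n) (G.n + q)))
        = ∑ q ∈ Finset.range H.n, ∑ p ∈ Finset.range G.n,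
            Multiset.replicate ((H.labels q ∩ G.labels p).card) s(q, H.n + p) := by
      rw [Finset.sum_comm]
      refine Finset.sum_congr rfl fun q hq => Finset.sum_congr rfl fun p hp => ?_
      rw [Finset.mem_range] at hq hp
      rw [extFin_swap_lt hp, extFin_swap_ge (by omega) (by omega)]
      congr 1
      · rw [Finset.inter_comm]
      · rw [show G.n + q - G.n = q by omega]
        exact Sym2.eq_swap
    dsimp only
    erw [h1, h2, h3]
    abel

end Sess
namespace Sess
open Finset

lemma sum_range_reindex {M : Type*} [AddCommMonoid M] {n m : ℕ}
    (σ : Fin n ≃ Fin m) (F : ℕ → M) :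
    ∑ p ∈ Finset.range n, F (extFin σ p) = ∑ p ∈ Finset.range m, F p := by
  rw [Finset.sum_range (fun p => F (extFin σ p)), Finset.sum_range F]
  exact Fintype.sum_equiv σ _ _ (fun i => by rw [extFin_val])

lemma glue_cong {G G' H H' : LGraph} (hG : EBound G) (hH : EBound H)
    (h1 : G.Iso G') (h2 : H.Iso H') : (G.glue H).Iso (G'.glue H') := by
  obtain ⟨σ, hlσ, heσ⟩ := h1
  obtain ⟨τ, hlτ, heτ⟩ := h2
  refine ⟨blockEquiv σ τ, ?_, ?_⟩
  · intro p
    have hp2 : (p : ℕ) < G.n + H.n := p.isLt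
    have hval := (extFin_val (blockEquiv σ τ) p).symm
    show (if (p : ℕ) < G.n then G.labels (p : ℕ) else H.labels ((p : ℕ) - G.n)) = _
    show _ = (if ((blockEquiv σ τ p : Fin (G'.n + H'.n)) : ℕ) < G'.n
        then G'.labels ((blockEquiv σ τ p : Fin (G'.n + H'.n)) : ℕ)
        else H'.labels (((blockEquiv σ τ p : Fin (G'.n + H'.n)) : ℕ) - G'.n))
    rw [hval]
    by_cases hp : (p : ℕ) < G.n
    · have hlt : extFin σ (p : ℕ) < G'.n := by
        rw [extFin_lt σ hp]; exact (σ ⟨_, hp⟩).isLt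
      rw [extFin_block_lt σ τ hp, if_pos hp, if_pos hlt]
      rw [extFin_lt σ hp]
      exact hlσ ⟨_, hp⟩
    · have hlt : (p : ℕ) - G.n < H.n := by omega
      have h2lt : extFin τ ((p : ℕ) - G.n) < H'.n := by
        rw [extFin_lt τ hlt]; exact (τ ⟨_, hlt⟩).isLt
      rw [extFin_block_ge σ τ (by omega) hp2, if_neg hp, if_neg (by omega)]
      rw [show G'.n + extFin τ ((p : ℕ) - G.n) - G'.n = extFin τ ((p : ℕ) - G.n) by omega]
      rw [extFin_lt τ hlt]
      exact hlτ ⟨_, hlt⟩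
  · rw [glue_edges_map, glue_edges_map]
    beta_reduce
    have e1 : Multiset.map (fun e => s(extFin (blockEquiv σ τ) e.1,
          extFin (blockEquiv σ τ) e.2)) (G.edges : Multiset (ℕ × ℕ))
        = Multiset.map (fun e => s(e.1, e.2)) (G'.edges : Multiset (ℕ × ℕ)) := by
      rw [← heσ]
      apply Multiset.map_congr rfl
      intro e he
      obtain ⟨b1, b2⟩ := hG e (by exact_mod_cast he)
      rw [extFin_block_lt σ τ b1, extFin_block_lt σ τ b2]
    have e2 : Multiset.map (fun e => s(extFin (blockEquiv σ τ) (G.n + e.1),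
          extFin (blockEquiv σ τ) (G.n + e.2))) (H.edges : Multiset (ℕ × ℕ))
        = Multiset.map (fun e => s(G'.n + e.1, G'.n + e.2))
            (H'.edges : Multiset (ℕ × ℕ)) := by
      calc Multiset.map (fun e => s(extFin (blockEquiv σ τ) (G.n + e.1),
              extFin (blockEquiv σ τ) (G.n + e.2))) (H.edges : Multiset (ℕ × ℕ))
          = Multiset.map (Sym2.map (fun x => G'.n + x))
              (Multiset.map (fun e => s(extFin τ e.1, extFin τ e.2))
                (H.edges : Multiset (ℕ × ℕ))) := by
            rw [Multiset.map_map]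
            apply Multiset.map_congr rfl
            intro e he
            obtain ⟨b1, b2⟩ := hH e (by exact_mod_cast he)
            rw [extFin_block_ge σ τ (by omega) (by omega),
              extFin_block_ge σ τ (by omega) (by omega),
              show G.n + e.1 - G.n = e.1 by omega, show G.n + e.2 - G.n = e.2 by omega]
            simp [Sym2.map_pair_eq]
        _ = Multiset.map (Sym2.map (fun x => G'.n + x))
              (Multiset.map (fun e => s(e.1, e.2)) (H'.edges : Multiset (ℕ × ℕ))) := by
            rw [heτ]
        _ = Multiset.map (fun e => s(G'.n + e.1, G'.n + e.2))
              (H'.edges : Multiset (ℕ × ℕ)) := by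
            rw [Multiset.map_map]
            apply Multiset.map_congr rfl
            rintro ⟨a, b⟩ _
            simp
    have e3 : (∑ p ∈ Finset.range G.n, ∑ q ∈ Finset.range H.n,
          Multiset.replicate ((G.labels p ∩ H.labels q).card)
            s(extFin (blockEquiv σ τ) p, extFin (blockEquiv σ τ) (G.n + q)))
        = ∑ p ∈ Finset.range G'.n, ∑ q ∈ Finset.range H'.n,
            Multiset.replicate ((G'.labels p ∩ H'.labels q).card) s(p, G'.n + q) := by
      have step1 : (∑ p ∈ Finset.range G.n, ∑ q ∈ Finset.range H.n,
            Multiset.replicate ((G.labels p ∩ H.labels q).card)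
              s(extFin (blockEquiv σ τ) p, extFin (blockEquiv σ τ) (G.n + q)))
          = ∑ p ∈ Finset.range G.n, ∑ q ∈ Finset.range H.n,
              Multiset.replicate ((G'.labels (extFin σ p) ∩ H'.labels (extFin τ q)).card)
                s(extFin σ p, G'.n + extFin τ q) := by
        refine Finset.sum_congr rfl fun p hp => Finset.sum_congr rfl fun q hq => ?_
        rw [Finset.mem_range] at hp hq
        have hl1 : G.labels p = G'.labels (extFin σ p) := by
          rw [extFin_lt σ hp]; exact hlσ ⟨_, hp⟩
        have hl2 : H.labels q = H'.labels (extFin τ q) := by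
          rw [extFin_lt τ hq]; exact hlτ ⟨_, hq⟩
        rw [extFin_block_lt σ τ hp, extFin_block_ge σ τ (by omega) (by omega),
          show G.n + q - G.n = q by omega, hl1, hl2]
      rw [step1]
      rw [sum_range_reindex σ (fun p' => ∑ q ∈ Finset.range H.n,
        Multiset.replicate ((G'.labels p' ∩ H'.labels (extFin τ q)).card)
          s(p', G'.n + extFin τ q))]
      refine Finset.sum_congr rfl fun p' _ => ?_
      exact sum_range_reindex τ (fun q' =>
        Multiset.replicate ((G'.labels p' ∩ H'.labels q').card) s(p', G'.n + q'))
    dsimp only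
    erw [e1, e2, e3]

end Sess
namespace Sess
open Finset

lemma glue_edges_coe (G H : LGraph) :
    ((G.glue H).edges : Multiset (ℕ × ℕ)) =
      (G.edges : Multiset (ℕ × ℕ))
      + Multiset.map (fun e => (G.n + e.1, G.n + e.2)) (H.edges : Multiset (ℕ × ℕ))
      + ∑ p ∈ Finset.range G.n, ∑ q ∈ Finset.range H.n,
          Multiset.replicate ((G.labels p ∩ H.labels q).card) (p, G.n + q) := by
  simp only [LGraph.glue]
  rw [← Multiset.coe_add, ← Multiset.coe_add]
  congr 1
  rw [coe_flatMap_range]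
  apply Finset.sum_congr rfl
  intro p _
  rw [coe_flatMap_range]
  apply Finset.sum_congr rfl
  intro q _
  rw [Multiset.coe_replicate]

lemma glue_nil (G : LGraph) : (G.glue LGraph.empty).Iso G := by
  apply iso_of_eq
  · rfl
  · intro p hp
    show (if p < G.n then G.labels p else _) = G.labels p
    rw [if_pos (show p < G.n from hp)]
  · rw [glue_edges_map]
    simp [LGraph.empty]

lemma glue_assoc (G H K : LGraph) :
    (G.glue (H.glue K)).Iso ((G.glue H).glue K) := by
  apply iso_of_eq
  · show G.n + (H.n + K.n) = (G.n + H.n) + K.n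
    omega
  · intro p hp
    have hp' : p < G.n + (H.n + K.n) := hp
    show (if p < G.n then G.labels p else
        (if p - G.n < H.n then H.labels (p - G.n) else K.labels (p - G.n - H.n))) =
      (if p < G.n + H.n then
        (if p < G.n then G.labels p else H.labels (p - G.n))
        else K.labels (p - (G.n + H.n)))
    by_cases h1 : p < G.n
    · rw [if_pos h1, if_pos (by omega), if_pos h1]
    · rw [if_neg h1]
      by_cases h2 : p - G.n < H.n
      · rw [if_pos h2, if_pos (by omega), if_neg h1]
      · rw [if_neg h2, if_neg (by omega)]
        congr 1
        omega
  · rw [glue_edges_map G (H.glue K) (fun e => s(e.1, e.2))]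
    dsimp only
    rw [glue_edges_map H K (fun e => s(G.n + e.1, G.n + e.2))]
    dsimp only
    rw [glue_edges_map (G.glue H) K (fun e => s(e.1, e.2))]
    dsimp only
    rw [glue_edges_map G H (fun e => s(e.1, e.2))]
    dsimp only
    have split1 : (∑ p ∈ Finset.range G.n, ∑ q ∈ Finset.range (H.glue K).n,
          Multiset.replicate ((G.labels p ∩ (H.glue K).labels q).card) s(p, G.n + q))
        = (∑ p ∈ Finset.range G.n, ∑ q ∈ Finset.range H.n,
            Multiset.replicate ((G.labels p ∩ H.labels q).card) s(p, G.n + q))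
          + ∑ p ∈ Finset.range G.n, ∑ r ∈ Finset.range K.n,
              Multiset.replicate ((G.labels p ∩ K.labels r).card) s(p, (G.n + H.n) + r) := by
      rw [← Finset.sum_add_distrib]
      refine Finset.sum_congr rfl fun p hp => ?_
      show (∑ q ∈ Finset.range (H.n + K.n), _) = _
      rw [Finset.sum_range_add]
      congr 1
      · refine Finset.sum_congr rfl fun q hq => ?_
        rw [Finset.mem_range] at hq
        show Multiset.replicate ((G.labels p ∩ (if q < H.n then H.labels q
          else K.labels (q - H.n))).card) s(p, G.n + q) = _
        rw [if_pos hq]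
      · refine Finset.sum_congr rfl fun r hr => ?_
        show Multiset.replicate ((G.labels p ∩ (if H.n + r < H.n then _
          else K.labels (H.n + r - H.n))).card) s(p, G.n + (H.n + r)) = _
        rw [if_neg (by omega), show H.n + r - H.n = r by omega,
          show G.n + (H.n + r) = (G.n + H.n) + r by omega]
    have split2 : (∑ p ∈ Finset.range (G.glue H).n, ∑ r ∈ Finset.range K.n,
          Multiset.replicate (((G.glue H).labels p ∩ K.labels r).card)
            s(p, (G.glue H).n + r))
        = (∑ p ∈ Finset.range G.n, ∑ r ∈ Finset.range K.n,
            Multiset.replicate ((G.labels p ∩ K.labels r).card) s(p, (G.n + H.n) + r))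
          + ∑ q ∈ Finset.range H.n, ∑ r ∈ Finset.range K.n,
              Multiset.replicate ((H.labels q ∩ K.labels r).card)
                s(G.n + q, (G.n + H.n) + r) := by
      show (∑ p ∈ Finset.range (G.n + H.n), _) = _
      rw [Finset.sum_range_add]
      congr 1
      · refine Finset.sum_congr rfl fun p hp => ?_
        rw [Finset.mem_range] at hp
        refine Finset.sum_congr rfl fun r hr => ?_
        show Multiset.replicate (((if p < G.n then G.labels p else _) ∩ K.labels r).card)
          s(p, (G.n + H.n) + r) = _
        rw [if_pos hp]
      · refine Finset.sum_congr rfl fun q hq => ?_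
        rw [Finset.mem_range] at hq
        refine Finset.sum_congr rfl fun r hr => ?_
        show Multiset.replicate (((if G.n + q < G.n then _ else H.labels (G.n + q - G.n))
          ∩ K.labels r).card) s(G.n + q, (G.n + H.n) + r) = _
        rw [if_neg (by omega), show G.n + q - G.n = q by omega]
    have shiftK : Multiset.map (fun e => s(G.n + (H.n + e.1), G.n + (H.n + e.2)))
          (K.edges : Multiset (ℕ × ℕ))
        = Multiset.map (fun e => s((G.n + H.n) + e.1, (G.n + H.n) + e.2))
            (K.edges : Multiset (ℕ × ℕ)) := by
      apply Multiset.map_congr rfl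
      intro e _
      rw [show G.n + (H.n + e.1) = (G.n + H.n) + e.1 by omega,
        show G.n + (H.n + e.2) = (G.n + H.n) + e.2 by omega]
    have crossHK : (∑ q ∈ Finset.range H.n, ∑ r ∈ Finset.range K.n,
          Multiset.replicate ((H.labels q ∩ K.labels r).card) s(G.n + q, G.n + (H.n + r)))
        = ∑ q ∈ Finset.range H.n, ∑ r ∈ Finset.range K.n,
            Multiset.replicate ((H.labels q ∩ K.labels r).card)
              s(G.n + q, (G.n + H.n) + r) := by
      refine Finset.sum_congr rfl fun q _ => Finset.sum_congr rfl fun r _ => ?_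
      rw [show G.n + (H.n + r) = (G.n + H.n) + r by omega]
    rw [split1, split2, shiftK, crossHK]
    simp only [show (G.glue H).n = G.n + H.n from rfl]
    abel

lemma eraseL_iso {G H : LGraph} (k : ℕ) (h : G.Iso H) :
    (LGraph.eraseL k G).Iso (LGraph.eraseL k H) := by
  obtain ⟨σ, hl, he⟩ := h
  refine ⟨σ, fun p => ?_, he⟩
  show (G.labels _).erase k = (H.labels _).erase k
  rw [hl p]
  rfl

lemma inter_erase_of_not_mem {A B : Finset ℕ} {k : ℕ} (h : k ∉ A) :
    A ∩ B.erase k = A ∩ B := by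
  ext c
  simp only [Finset.mem_inter, Finset.mem_erase]
  constructor
  · rintro ⟨h1, _, h2⟩; exact ⟨h1, h2⟩
  · rintro ⟨h1, h2⟩; exact ⟨h1, fun hc => h (hc ▸ h1), h2⟩

lemma scope_iso {G H : LGraph} {k : ℕ} (hk : ∀ p, p < G.n → k ∉ G.labels p) :
    (G.glue (LGraph.eraseL k H)).Iso (LGraph.eraseL k (G.glue H)) := by
  apply iso_of_eq
  · rfl
  · intro p hp
    have hp' : p < G.n + H.n := hp
    show (if p < G.n then G.labels p else (H.labels (p - G.n)).erase k)
      = (if p < G.n then G.labels p else H.labels (p - G.n)).erase k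
    by_cases h1 : p < G.n
    · rw [if_pos h1, if_pos h1, Finset.erase_eq_of_notMem (hk p h1)]
    · rw [if_neg h1, if_neg h1]
  · show _ = Multiset.map _ ((G.glue H).edges : Multiset (ℕ × ℕ))
    rw [glue_edges_map, glue_edges_map]
    congr 1
    refine Finset.sum_congr rfl fun p hp => Finset.sum_congr rfl fun q _ => ?_
    rw [Finset.mem_range] at hp
    show Multiset.replicate ((G.labels p ∩ (H.labels q).erase k).card) _ = _
    rw [inter_erase_of_not_mem (hk p hp)]

end Sess
namespace Sess
open Finset

lemma graphOf_srename (f : ℕ → ℕ) : ∀ P : Proc, Set.InjOn f ↑(chans P) →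
    (graphOf (srename f P)).n = (graphOf P).n ∧
    ((graphOf (srename f P)).edges : Multiset (ℕ × ℕ))
        = ((graphOf P).edges : Multiset (ℕ × ℕ)) ∧
    ∀ p, p < (graphOf P).n →
      (graphOf (srename f P)).labels p = ((graphOf P).labels p).image f := by
  intro P
  induction P with
  | nil =>
      intro _
      refine ⟨rfl, rfl, fun p hp => absurd hp (by simp [graphOf, LGraph.empty])⟩
  | par P Q ihP ihQ =>
      intro hf
      obtain ⟨hn1, he1, hl1⟩ := ihP (hf.mono (by intro x hx; simp [chans] at hx ⊢; tauto))
      obtain ⟨hn2, he2, hl2⟩ := ihQ (hf.mono (by intro x hx; simp [chans] at hx ⊢; tauto))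
      refine ⟨?_, ?_, ?_⟩
      · show (graphOf (srename f P)).n + (graphOf (srename f Q)).n = _
        rw [hn1, hn2]; rfl
      · show ((LGraph.glue _ _).edges : Multiset (ℕ × ℕ)) = ((LGraph.glue _ _).edges : Multiset (ℕ × ℕ))
        rw [glue_edges_coe, glue_edges_coe, hn1, he1, he2]
        congr 1
        rw [hn2]
        refine Finset.sum_congr rfl fun p hp => Finset.sum_congr rfl fun q hq => ?_
        rw [Finset.mem_range] at hp hq
        rw [hl1 p hp, hl2 q hq]
        congr 1
        have hinj : Set.InjOn f (↑((graphOf P).labels p) ∪ ↑((graphOf Q).labels q)) := by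
          apply hf.mono
          apply Set.union_subset
          · intro x hx
            have := (labels_sub P p hp).trans (fsc_subset_chans P) hx
            simp [chans]; tauto
          · intro x hx
            have := (labels_sub Q q hq).trans (fsc_subset_chans Q) hx
            simp [chans]; tauto
        rw [← Finset.image_inter_of_injOn _ _ hinj]
        rw [Finset.card_image_of_injOn
          (hinj.mono (by rw [Finset.coe_inter]; intro x hx; exact Or.inl hx.1))]
        
      · intro p hp
        have hp' : p < (graphOf P).n + (graphOf Q).n := hp
        show (if p < (graphOf (srename f P)).n then (graphOf (srename f P)).labels p
          else (graphOf (srename f Q)).labels (p - (graphOf (srename f P)).n)) = _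
        show _ = ((if p < (graphOf P).n then (graphOf P).labels p
          else (graphOf Q).labels (p - (graphOf P).n)) : Finset ℕ).image f
        rw [hn1]
        by_cases h1 : p < (graphOf P).n
        · rw [if_pos h1, if_pos h1, hl1 p h1]
        · rw [if_neg h1, if_neg h1, hl2 _ (by omega)]
  | nu k P ih =>
      intro hf
      obtain ⟨hn, he, hl⟩ := ih (hf.mono (by intro x hx; simp [chans] at hx ⊢; tauto))
      refine ⟨hn, he, ?_⟩
      intro p hp
      show ((graphOf (srename f P)).labels p).erase (f k)
        = (((graphOf P).labels p).erase k).image f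
      rw [hl p hp, image_erase_of_injOn]
      apply hf.mono
      intro x hx
      simp only [Finset.coe_insert, Set.mem_insert_iff, Finset.mem_coe] at hx
      simp only [chans, Finset.coe_insert, Set.mem_insert_iff, Finset.mem_coe]
      rcases hx with h | h
      · exact Or.inl h
      · exact Or.inr ((labels_sub P p hp).trans (fsc_subset_chans P) h)
  | serv a k P ih => intro hf; exact ⟨rfl, rfl, fun p _ => fsc_srename f _ hf⟩
  | rserv a k P ih => intro hf; exact ⟨rfl, rfl, fun p _ => fsc_srename f _ hf⟩
  | req a k P ih => intro hf; exact ⟨rfl, rfl, fun p _ => fsc_srename f _ hf⟩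
  | inp k x P ih => intro hf; exact ⟨rfl, rfl, fun p _ => fsc_srename f _ hf⟩
  | out k e P ih => intro hf; exact ⟨rfl, rfl, fun p _ => fsc_srename f _ hf⟩
  | inS k k' P ih => intro hf; exact ⟨rfl, rfl, fun p _ => fsc_srename f _ hf⟩
  | outS k k' P ih => intro hf; exact ⟨rfl, rfl, fun p _ => fsc_srename f _ hf⟩
  | branch k n Ps ih => intro hf; exact ⟨rfl, rfl, fun p _ => fsc_srename f _ hf⟩
  | sel k j P ih => intro hf; exact ⟨rfl, rfl, fun p _ => fsc_srename f _ hf⟩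
  | cond e P Q ihP ihQ => intro hf; exact ⟨rfl, rfl, fun p _ => fsc_srename f _ hf⟩

lemma image_swap_erase {k k' : ℕ} {L : Finset ℕ} (h : k' ∉ L) :
    ((L.image (fun c => if c = k then k' else c)).erase k') = L.erase k := by
  ext c
  simp only [Finset.mem_erase, Finset.mem_image]
  constructor
  · rintro ⟨hne, a, ha, hfa⟩
    by_cases hak : a = k
    · exfalso; apply hne; rw [← hfa, hak]; simp
    · rw [if_neg hak] at hfa
      subst hfa
      exact ⟨hak, ha⟩
  · rintro ⟨hck, hc⟩
    refine ⟨fun hckk => h (hckk ▸ hc), c, hc, ?_⟩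
    rw [if_neg hck]

lemma single_iso {s t : Finset ℕ} (h : s = t) :
    (LGraph.single s).Iso (LGraph.single t) :=
  iso_of_eq rfl (fun _ _ => h) rfl

end Sess
namespace Sess
open Finset

theorem graphOf_scong_aux {P Q : Proc} (h : SCong P Q) :
    (graphOf P).Iso (graphOf Q) := by
  induction h with
  | refl P => exact iso_refl _
  | symm _ ih => exact iso_symm ih
  | trans _ _ ih1 ih2 => exact iso_trans ih1 ih2
  | parComm P Q => exact glue_comm (graphOf_bounded P) (graphOf_bounded Q)
  | parAssoc P Q R => exact glue_assoc _ _ _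
  | parNil P => exact glue_nil _
  | nuNil k =>
      exact iso_of_eq rfl
        (fun p hp => absurd hp (by simp [graphOf, LGraph.empty, LGraph.eraseL])) rfl
  | scope P Q k hk =>
      exact scope_iso (fun p hp hmem => hk (labels_sub P p hp hmem))
  | alpha P k k' hk' =>
      have hf := swap_injOn (k := k) hk'
      obtain ⟨hn, he, hl⟩ := graphOf_srename _ P hf
      apply iso_of_eq
      · exact hn.symm
      · intro p hp
        show ((graphOf P).labels p).erase k
          = ((graphOf (srename _ P)).labels p).erase k'
        rw [hl p hp, image_swap_erase
          (fun hmem => hk' ((labels_sub P p hp).trans (fsc_subset_chans P) hmem))]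
      · show Multiset.map _ ((graphOf P).edges : Multiset (ℕ × ℕ))
          = Multiset.map _ ((graphOf (srename _ P)).edges : Multiset (ℕ × ℕ))
        rw [he]
  | parCong _ _ ih1 ih2 =>
      exact glue_cong (graphOf_bounded _) (graphOf_bounded _) ih1 ih2
  | nuCong k _ ih => exact eraseL_iso k ih
  | servCong a k hc ih =>
      exact single_iso (by simp only [fsc]; rw [fsc_scong hc])
  | rservCong a k hc ih =>
      exact single_iso (by simp only [fsc]; rw [fsc_scong hc])
  | reqCong a k hc ih =>
      exact single_iso (by simp only [fsc]; rw [fsc_scong hc])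
  | inpCong k x hc ih =>
      exact single_iso (by simp only [fsc]; rw [fsc_scong hc])
  | outCong k e hc ih =>
      exact single_iso (by simp only [fsc]; rw [fsc_scong hc])
  | inSCong k k' hc ih =>
      exact single_iso (by simp only [fsc]; rw [fsc_scong hc])
  | outSCong k k' hc ih =>
      exact single_iso (by simp only [fsc]; rw [fsc_scong hc])
  | branchCong k hc ih =>
      refine single_iso ?_
      simp only [fsc]
      congr 1
      exact Finset.biUnion_congr rfl fun i _ => fsc_scong (hc i)
  | selCong k j hc ih =>
      exact single_iso (by simp only [fsc]; rw [fsc_scong hc])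
  | condCong e hc1 hc2 ih1 ih2 =>
      exact single_iso (by simp only [fsc]; rw [fsc_scong hc1, fsc_scong hc2])

end Sess
namespace Sess

/-- the session dependency graph is invariant under structural
congruence: structurally congruent well-typed processes have isomorphic
session dependency graphs. -/
theorem graphOf_scong_iso {P Q : Proc} (hP : WellTyped P) (hQ : WellTyped Q)
    (h : SCong P Q) : (graphOf P).Iso (graphOf Q) := by
  exact graphOf_scong_aux h

end Sess
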